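/- arXiv:1404.3146 — 4 statements merged into one kernel-verified Lean document; each statement's English description precedes it below -/
import Mathlib

section
/- For any joint distribution P of (X,Y,Z) on finite state spaces, the four quantities satisfy MI_P(X:(Y,Z)) = \widetilde{SI}(X:Y;Z) + \widetilde{UI}(X:Y\setminus Z) + \widetilde{UI}(X:Z\setminus Y) + \widetilde{CI}(X:Y;Z). -/
open scoped BigOperators Classical

noncomputable section

/-- Shannon entropy (in bits) of a distribution on a finite type. -/
def ent {A : Type*} [Fintype A] (q : A → ℝ) : ℝ :=
  -∑ a, q a * Real.logb 2 (q a)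

def ent2 {A B : Type*} [Fintype A] [Fintype B] (q : A → B → ℝ) : ℝ :=
  ent (fun p : A × B => q p.1 p.2)

def ent3 {A B C : Type*} [Fintype A] [Fintype B] [Fintype C] (q : A → B → C → ℝ) : ℝ :=
  ent (fun p : A × B × C => q p.1 p.2.1 p.2.2)

/-- Mutual information MI(A:B) (in bits) of a joint distribution `q`. -/
def MI {A B : Type*} [Fintype A] [Fintype B] (q : A → B → ℝ) : ℝ :=
  ent (fun a => ∑ b, q a b) + ent (fun b => ∑ a, q a b) - ent2 q

/-- Conditional mutual information MI(A:B|C) of a joint distribution `q` of (A,B,C):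
`MI(A:B|C) = H(A,C) + H(B,C) - H(C) - H(A,B,C)`. -/
def CMI {A B C : Type*} [Fintype A] [Fintype B] [Fintype C] (q : A → B → C → ℝ) : ℝ :=
  ent2 (fun a c => ∑ b, q a b c) + ent2 (fun b c => ∑ a, q a b c)
    - ent (fun c => ∑ a, ∑ b, q a b c) - ent3 q

/-- Coinformation CoI(A;B;C) = MI(A:B) - MI(A:B|C). -/
def CoI {A B C : Type*} [Fintype A] [Fintype B] [Fintype C] (q : A → B → C → ℝ) : ℝ :=
  MI (fun a b => ∑ c, q a b c) - CMI q

structure IsDist2 {A B : Type*} [Fintype A] [Fintype B] (q : A → B → ℝ) : Prop where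
  nonneg : ∀ a b, 0 ≤ q a b
  sum_one : ∑ a, ∑ b, q a b = 1

structure IsDist3 {A B C : Type*} [Fintype A] [Fintype B] [Fintype C]
    (q : A → B → C → ℝ) : Prop where
  nonneg : ∀ a b c, 0 ≤ q a b c
  sum_one : ∑ a, ∑ b, ∑ c, q a b c = 1

structure IsDist4 {A B C D : Type*} [Fintype A] [Fintype B] [Fintype C] [Fintype D]
    (q : A → B → C → D → ℝ) : Prop where
  nonneg : ∀ a b c d, 0 ≤ q a b c d
  sum_one : ∑ a, ∑ b, ∑ c, ∑ d, q a b c d = 1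

structure IsDist5 {A B C D E : Type*} [Fintype A] [Fintype B] [Fintype C] [Fintype D] [Fintype E]
    (q : A → B → C → D → E → ℝ) : Prop where
  nonneg : ∀ a b c d e, 0 ≤ q a b c d e
  sum_one : ∑ a, ∑ b, ∑ c, ∑ d, ∑ e, q a b c d e = 1

/-- Δ_P: the joint distributions of (X,Y,Z) having the same (X,Y)- and (X,Z)-marginals as P. -/
def Delta {A B C : Type*} [Fintype A] [Fintype B] [Fintype C] (p : A → B → C → ℝ) :
    Set (A → B → C → ℝ) :=
  {q | IsDist3 q ∧ (∀ a b, ∑ c, q a b c = ∑ c, p a b c)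
      ∧ (∀ a c, ∑ b, q a b c = ∑ b, p a b c)}

/-- MI(X:(Y,Z)). -/
def MIpair {A B C : Type*} [Fintype A] [Fintype B] [Fintype C] (q : A → B → C → ℝ) : ℝ :=
  MI (fun a (p : B × C) => q a p.1 p.2)

/-- The unique information UI~(X : Y \ Z) = min over Δ_P of MI_Q(X:Y|Z). -/
def UI {A B C : Type*} [Fintype A] [Fintype B] [Fintype C] (p : A → B → C → ℝ) : ℝ :=
  sInf (CMI '' Delta p)

/-- The unique information UI~(X : Z \ Y) = min over Δ_P of MI_Q(X:Z|Y). -/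
def UIr {A B C : Type*} [Fintype A] [Fintype B] [Fintype C] (p : A → B → C → ℝ) : ℝ :=
  sInf ((fun q => CMI (fun a c b => q a b c)) '' Delta p)

/-- The shared information SI~(X : Y ; Z) = max over Δ_P of CoI_Q(X;Y;Z). -/
def SI {A B C : Type*} [Fintype A] [Fintype B] [Fintype C] (p : A → B → C → ℝ) : ℝ :=
  sSup (CoI '' Delta p)

/-- The complementary information CI~(X : Y ; Z) = MI_P(X:(Y,Z)) - min over Δ_P of MI_Q(X:(Y,Z)). -/
def CI {A B C : Type*} [Fintype A] [Fintype B] [Fintype C] (p : A → B → C → ℝ) : ℝ :=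
  MIpair p - sInf (MIpair '' Delta p)


/-! ### Auxiliary lemmas -/

lemma ent2_iter {A B : Type*} [Fintype A] [Fintype B] (q : A → B → ℝ) :
    ent2 q = -∑ a, ∑ b, q a b * Real.logb 2 (q a b) := by
  simp [ent2, ent, Fintype.sum_prod_type]

lemma ent3_iter {A B C : Type*} [Fintype A] [Fintype B] [Fintype C] (q : A → B → C → ℝ) :
    ent3 q = -∑ a, ∑ b, ∑ c, q a b c * Real.logb 2 (q a b c) := by
  simp [ent3, ent, Fintype.sum_prod_type]

lemma ent2_swap {B C : Type*} [Fintype B] [Fintype C] (f : B → C → ℝ) :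
    ent2 f = ent2 (fun c b => f b c) := by
  rw [ent2_iter, ent2_iter, Finset.sum_comm]

lemma ent3_swap23 {A B C : Type*} [Fintype A] [Fintype B] [Fintype C] (q : A → B → C → ℝ) :
    ent3 (fun a c b => q a b c) = ent3 q := by
  rw [ent3_iter, ent3_iter]
  congr 1
  exact Finset.sum_congr rfl fun a _ => Finset.sum_comm

/-- Chain rule: `MI(X:(Y,Z)) = MI(X:Z) + MI(X:Y|Z)`, as an algebraic identity of entropies. -/
lemma chain1 {A B C : Type*} [Fintype A] [Fintype B] [Fintype C] (q : A → B → C → ℝ) :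
    MIpair q = MI (fun a c => ∑ b, q a b c) + CMI q := by
  unfold MIpair MI CMI
  have h1 : (fun a => ∑ p : B × C, q a p.1 p.2) = (fun a => ∑ c, ∑ b, q a b c) := by
    funext a; rw [Fintype.sum_prod_type]; exact Finset.sum_comm
  have h2 : ent (fun p : B × C => ∑ a, q a p.1 p.2) = ent2 (fun b c => ∑ a, q a b c) := rfl
  have h3 : ent2 (fun a (p : B × C) => q a p.1 p.2) = ent3 q := rfl
  rw [h1, h2, h3]; ring

/-- Chain rule: `MI(X:(Y,Z)) = MI(X:Y) + MI(X:Z|Y)`. -/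
lemma chain2 {A B C : Type*} [Fintype A] [Fintype B] [Fintype C] (q : A → B → C → ℝ) :
    MIpair q = MI (fun a b => ∑ c, q a b c) + CMI (fun a c b => q a b c) := by
  unfold MIpair MI CMI
  have h1 : (fun a => ∑ p : B × C, q a p.1 p.2) = (fun a => ∑ b, ∑ c, q a b c) := by
    funext a; rw [Fintype.sum_prod_type]
  have h2 : ent (fun p : B × C => ∑ a, q a p.1 p.2) = ent2 (fun c b => ∑ a, q a b c) := by
    show ent2 (fun b c => ∑ a, q a b c) = _
    exact ent2_swap _
  have h3 : ent2 (fun a (p : B × C) => q a p.1 p.2) = ent3 (fun a c b => q a b c) := by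
    show ent3 q = _
    exact (ent3_swap23 q).symm
  rw [h1, h2, h3]; ring

lemma mul_logb_ge (x : ℝ) (h0 : 0 ≤ x) : -2 ≤ x * Real.logb 2 x := by
  rcases h0.eq_or_lt with h | h
  · simp [← h]
  · have hlog : Real.log x⁻¹ ≤ x⁻¹ - 1 := Real.log_le_sub_one_of_pos (by positivity)
    rw [Real.log_inv] at hlog
    have hxi : x * x⁻¹ = 1 := mul_inv_cancel₀ h.ne'
    have hx1 : -1 ≤ x * Real.log x := by nlinarith [mul_le_mul_of_nonneg_left hlog h.le]
    have hl2 : (0.6931471803 : ℝ) < Real.log 2 := Real.log_two_gt_d9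
    have ht : (0:ℝ) < Real.log 2 := by linarith
    have heq : x * Real.logb 2 x = (x * Real.log x) / Real.log 2 := by
      rw [Real.logb]; ring
    rw [heq, le_div_iff₀ ht]; nlinarith

lemma ent_nonneg {A : Type*} [Fintype A] (f : A → ℝ) (h0 : ∀ a, 0 ≤ f a)
    (h1 : ∀ a, f a ≤ 1) : 0 ≤ ent f := by
  rw [ent, neg_nonneg]
  exact Finset.sum_nonpos fun a _ =>
    mul_nonpos_of_nonneg_of_nonpos (h0 a) (Real.logb_nonpos one_lt_two (h0 a) (h1 a))

lemma ent_le {A : Type*} [Fintype A] (f : A → ℝ) (h0 : ∀ a, 0 ≤ f a) :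
    ent f ≤ 2 * Fintype.card A := by
  rw [ent, ← Finset.sum_neg_distrib]
  calc ∑ a, -(f a * Real.logb 2 (f a)) ≤ ∑ _a : A, (2:ℝ) :=
        Finset.sum_le_sum fun a _ => by have := mul_logb_ge (f a) (h0 a); linarith
    _ = 2 * Fintype.card A := by simp [mul_comm]

lemma sInf_sub_const (S : Set ℝ) (c : ℝ) (hne : S.Nonempty) (hbd : BddBelow S) :
    sInf ((fun x => x - c) '' S) = sInf S - c := by
  obtain ⟨L, hL⟩ := hbd
  have hbd' : BddBelow ((fun x => x - c) '' S) := by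
    refine ⟨L - c, ?_⟩
    rintro y ⟨x, hx, rfl⟩
    have := hL hx
    simp only
    linarith
  apply le_antisymm
  · have h1 : sInf ((fun x => x - c) '' S) + c ≤ sInf S := by
      refine le_csInf hne fun x hx => ?_
      have := csInf_le hbd' ⟨x, hx, rfl⟩
      simp only at this
      linarith
    linarith
  · refine le_csInf (hne.image _) ?_
    rintro y ⟨x, hx, rfl⟩
    have := csInf_le ⟨L, hL⟩ hx
    simp only
    linarith

lemma sSup_const_sub (S : Set ℝ) (c : ℝ) (hne : S.Nonempty) (hbd : BddBelow S) :
    sSup ((fun x => c - x) '' S) = c - sInf S := by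
  obtain ⟨L, hL⟩ := hbd
  have hbd' : BddAbove ((fun x => c - x) '' S) := by
    refine ⟨c - L, ?_⟩
    rintro y ⟨x, hx, rfl⟩
    have := hL hx
    simp only
    linarith
  apply le_antisymm
  · refine csSup_le (hne.image _) ?_
    rintro y ⟨x, hx, rfl⟩
    have := csInf_le ⟨L, hL⟩ hx
    simp only
    linarith
  · have h1 : c - sSup ((fun x => c - x) '' S) ≤ sInf S := by
      refine le_csInf hne fun x hx => ?_
      have := le_csSup hbd' ⟨x, hx, rfl⟩
      simp only at this
      linarith
    linarith

/-- Crude lower bound on `MIpair` for a distribution, giving `BddBelow`. -/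
lemma MIpair_lower {A B C : Type*} [Fintype A] [Fintype B] [Fintype C]
    (q : A → B → C → ℝ) (hq : IsDist3 q) :
    -(2 * (Fintype.card (A × B × C) : ℝ)) ≤ MIpair q := by
  have htot : ∑ a, ∑ pr : B × C, q a pr.1 pr.2 = 1 := by
    simpa [Fintype.sum_prod_type] using hq.sum_one
  have hu0 : ∀ a, 0 ≤ ∑ pr : B × C, q a pr.1 pr.2 := fun a =>
    Finset.sum_nonneg fun pr _ => hq.nonneg a pr.1 pr.2
  have hu1 : ∀ a, ∑ pr : B × C, q a pr.1 pr.2 ≤ 1 := by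
    intro a
    calc ∑ pr : B × C, q a pr.1 pr.2
        ≤ ∑ a', ∑ pr : B × C, q a' pr.1 pr.2 :=
          Finset.single_le_sum (fun a' _ => hu0 a') (Finset.mem_univ a)
      _ = 1 := htot
  have hv0 : ∀ pr : B × C, 0 ≤ ∑ a, q a pr.1 pr.2 := fun pr =>
    Finset.sum_nonneg fun a _ => hq.nonneg a pr.1 pr.2
  have hv1 : ∀ pr : B × C, ∑ a, q a pr.1 pr.2 ≤ 1 := by
    intro pr
    calc ∑ a, q a pr.1 pr.2
        ≤ ∑ pr' : B × C, ∑ a, q a pr'.1 pr'.2 :=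
          Finset.single_le_sum (fun pr' _ => hv0 pr') (Finset.mem_univ pr)
      _ = 1 := by rw [Finset.sum_comm]; exact htot
  have hw0 : ∀ r : A × B × C, 0 ≤ q r.1 r.2.1 r.2.2 := fun r =>
    hq.nonneg r.1 r.2.1 r.2.2
  have hMI : MIpair q = ent (fun a => ∑ pr : B × C, q a pr.1 pr.2)
      + ent (fun pr : B × C => ∑ a, q a pr.1 pr.2)
      - ent (fun r : A × B × C => q r.1 r.2.1 r.2.2) := rfl
  have h1 := ent_nonneg _ hu0 hu1
  have h2 := ent_nonneg _ hv0 hv1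
  have h3 := ent_le (fun r : A × B × C => q r.1 r.2.1 r.2.2) hw0
  rw [hMI]
  linarith

/-- `MI(X:(Y,Z)) = SI~(X:Y;Z) + UI~(X:Y\Z) + UI~(X:Z\Y) + CI~(X:Y;Z)`. -/
theorem MI_decomposition {X Y Z : Type*} [Fintype X] [Fintype Y] [Fintype Z]
    (p : X → Y → Z → ℝ) (hp : IsDist3 p) :
    MIpair p = SI p + UI p + UIr p + CI p := by
  classical
  have hpD : p ∈ Delta p := ⟨hp, fun _ _ => rfl, fun _ _ => rfl⟩
  have hne : (MIpair '' Delta p).Nonempty := ⟨MIpair p, p, hpD, rfl⟩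
  have hbd : BddBelow (MIpair '' Delta p) := by
    refine ⟨-(2 * (Fintype.card (X × Y × Z) : ℝ)), ?_⟩
    rintro y ⟨q, hq, rfl⟩
    exact MIpair_lower q hq.1
  have key1 : ∀ q ∈ Delta p, CMI q = MIpair q - MI (fun a c => ∑ b, p a b c) := by
    intro q hq
    have hm : (fun a c => ∑ b, q a b c) = (fun a c => ∑ b, p a b c) := by
      funext a c; exact hq.2.2 a c
    have h := chain1 q
    rw [hm] at h
    linarith
  have key2 : ∀ q ∈ Delta p,
      CMI (fun a c b => q a b c) = MIpair q - MI (fun a b => ∑ c, p a b c) := by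
    intro q hq
    have hm : (fun a b => ∑ c, q a b c) = (fun a b => ∑ c, p a b c) := by
      funext a b; exact hq.2.1 a b
    have h := chain2 q
    rw [hm] at h
    linarith
  have key3 : ∀ q ∈ Delta p,
      CoI q = (MI (fun a b => ∑ c, p a b c) + MI (fun a c => ∑ b, p a b c)) - MIpair q := by
    intro q hq
    have hm : (fun a b => ∑ c, q a b c) = (fun a b => ∑ c, p a b c) := by
      funext a b; exact hq.2.1 a b
    have hc : CoI q = MI (fun a b => ∑ c, q a b c) - CMI q := rfl
    rw [hc, hm, key1 q hq]
    ring
  have hUI : UI p = sInf (MIpair '' Delta p) - MI (fun a c => ∑ b, p a b c) := by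
    have himg : CMI '' Delta p
        = (fun x => x - MI (fun a c => ∑ b, p a b c)) '' (MIpair '' Delta p) := by
      rw [Set.image_image]
      exact Set.image_congr key1
    rw [UI, himg, sInf_sub_const _ _ hne hbd]
  have hUIr : UIr p = sInf (MIpair '' Delta p) - MI (fun a b => ∑ c, p a b c) := by
    have himg : (fun q => CMI (fun a c b => q a b c)) '' Delta p
        = (fun x => x - MI (fun a b => ∑ c, p a b c)) '' (MIpair '' Delta p) := by
      rw [Set.image_image]
      exact Set.image_congr key2
    rw [UIr, himg, sInf_sub_const _ _ hne hbd]
  have hSI : SI p = (MI (fun a b => ∑ c, p a b c) + MI (fun a c => ∑ b, p a b c))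
      - sInf (MIpair '' Delta p) := by
    have himg : CoI '' Delta p
        = (fun x => (MI (fun a b => ∑ c, p a b c) + MI (fun a c => ∑ b, p a b c)) - x)
          '' (MIpair '' Delta p) := by
      rw [Set.image_image]
      exact Set.image_congr key3
    rw [SI, himg, sSup_const_sub _ _ hne hbd]
  have hCI : CI p = MIpair p - sInf (MIpair '' Delta p) := rfl
  rw [hUI, hUIr, hSI, hCI]
  ring


end
end

section
/- The quantities \widetilde{UI}(X:Y\setminus Z), \widetilde{UI}(X:Z\setminus Y), \widetilde{SI}(X:Y;Z) and \widetilde{CI}(X:Y;Z) are all non-negative. -/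
open scoped BigOperators Classical

noncomputable section

section Aux
variable {A B C : Type*} [Fintype A] [Fintype B] [Fintype C]

lemma kl_aux {q r : ℝ} (hq : 0 ≤ q) (hr : 0 ≤ r) (habs : r = 0 → q = 0) :
    (q - r) / Real.log 2 ≤ q * (Real.logb 2 q - Real.logb 2 r) := by
  have h2 : (0:ℝ) < Real.log 2 := Real.log_pos (by norm_num)
  rcases eq_or_lt_of_le hq with h | hq'
  · rw [← h]
    simp only [zero_mul, zero_sub]
    apply div_nonpos_of_nonpos_of_nonneg (by linarith) (le_of_lt h2)
  · have hr' : 0 < r := lt_of_le_of_ne hr (fun h2 => by have := habs h2.symm; linarith)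
    have hlog := Real.log_le_sub_one_of_pos (div_pos hr' hq')
    rw [Real.log_div (ne_of_gt hr') (ne_of_gt hq')] at hlog
    rw [Real.logb, Real.logb, div_le_iff₀ h2]
    have hkey : q - r ≤ q * (Real.log q - Real.log r) := by
      have hmul := mul_le_mul_of_nonneg_left hlog (le_of_lt hq')
      have hx : q * (r/q - 1) = r - q := by field_simp
      nlinarith
    calc q - r ≤ q * (Real.log q - Real.log r) := hkey
      _ = q * (Real.log q / Real.log 2 - Real.log r / Real.log 2) * Real.log 2 := by
          field_simp

lemma kl_nonneg {ι : Type*} [Fintype ι] (q r : ι → ℝ) (hq : ∀ i, 0 ≤ q i)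
    (hr : ∀ i, 0 ≤ r i) (habs : ∀ i, r i = 0 → q i = 0)
    (hsum : ∑ i, r i ≤ ∑ i, q i) :
    0 ≤ ∑ i, q i * (Real.logb 2 (q i) - Real.logb 2 (r i)) := by
  have h2 : (0:ℝ) < Real.log 2 := Real.log_pos (by norm_num)
  have key : ∑ i, (q i - r i) / Real.log 2 ≤ ∑ i, q i * (Real.logb 2 (q i) - Real.logb 2 (r i)) :=
    Finset.sum_le_sum fun i _ => kl_aux (hq i) (hr i) (habs i)
  have h0 : (0:ℝ) ≤ ∑ i, (q i - r i) / Real.log 2 := by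
    rw [← Finset.sum_div, Finset.sum_sub_distrib]
    apply div_nonneg (by linarith) (le_of_lt h2)
  linarith
variable {A B C : Type*} [Fintype A] [Fintype B] [Fintype C]

lemma MI_eq (q : A → B → ℝ) :
    MI q = ∑ a, ∑ b, q a b *
      (Real.logb 2 (q a b) - Real.logb 2 (∑ y, q a y) - Real.logb 2 (∑ x, q x b)) := by
  unfold MI ent2 ent
  rw [Fintype.sum_prod_type]
  simp only [mul_sub, Finset.sum_sub_distrib]
  have h1 : ∑ a, ∑ b, q a b * Real.logb 2 (∑ y, q a y)
      = ∑ a, (∑ b, q a b) * Real.logb 2 (∑ y, q a y) := by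
    refine Finset.sum_congr rfl fun a _ => ?_
    rw [Finset.sum_mul]
  have h2 : ∑ a, ∑ b, q a b * Real.logb 2 (∑ x, q x b)
      = ∑ b, (∑ a, q a b) * Real.logb 2 (∑ x, q x b) := by
    rw [Finset.sum_comm]
    refine Finset.sum_congr rfl fun b _ => ?_
    rw [Finset.sum_mul]
  rw [h1, h2]
  ring

lemma CMI_eq (q : A → B → C → ℝ) :
    CMI q = ∑ a, ∑ b, ∑ c, q a b c *
      (Real.logb 2 (q a b c) + Real.logb 2 (∑ x, ∑ y, q x y c)
        - Real.logb 2 (∑ y, q a y c) - Real.logb 2 (∑ x, q x b c)) := by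
  unfold CMI ent2 ent3 ent
  rw [Fintype.sum_prod_type, Fintype.sum_prod_type, Fintype.sum_prod_type]
  simp only [Fintype.sum_prod_type]
  simp only [mul_sub, mul_add, Finset.sum_sub_distrib, Finset.sum_add_distrib]
  have hq : ∑ a, ∑ b, ∑ c, q a b c * Real.logb 2 (q a b c)
      = ∑ a, ∑ b, ∑ c, q a b c * Real.logb 2 (q a b c) := rfl
  have h1 : ∑ a, ∑ b, ∑ c, q a b c * Real.logb 2 (∑ y, q a y c)
      = ∑ a, ∑ c, (∑ y, q a y c) * Real.logb 2 (∑ y, q a y c) := by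
    refine Finset.sum_congr rfl fun a _ => ?_
    rw [Finset.sum_comm]
    exact Finset.sum_congr rfl fun c _ => (Finset.sum_mul _ _ _).symm
  have h2 : ∑ a, ∑ b, ∑ c, q a b c * Real.logb 2 (∑ x, q x b c)
      = ∑ b, ∑ c, (∑ x, q x b c) * Real.logb 2 (∑ x, q x b c) := by
    rw [Finset.sum_comm]
    refine Finset.sum_congr rfl fun b _ => ?_
    rw [Finset.sum_comm]
    exact Finset.sum_congr rfl fun c _ => (Finset.sum_mul _ _ _).symm
  have h3 : ∑ a, ∑ b, ∑ c, q a b c * Real.logb 2 (∑ x, ∑ y, q x y c)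
      = ∑ c, (∑ x, ∑ y, q x y c) * Real.logb 2 (∑ x, ∑ y, q x y c) := by
    have : ∀ a, ∑ b, ∑ c, q a b c * Real.logb 2 (∑ x, ∑ y, q x y c)
        = ∑ c, ∑ b, q a b c * Real.logb 2 (∑ x, ∑ y, q x y c) := fun a => Finset.sum_comm ..

    rw [Finset.sum_congr rfl fun a _ => this a, Finset.sum_comm]
    refine Finset.sum_congr rfl fun c _ => ?_
    rw [Finset.sum_mul]
    exact Finset.sum_congr rfl fun a _ => (Finset.sum_mul _ _ _).symm
  rw [h1, h2, h3]
  ring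

lemma marg_pos_left {q : A → B → ℝ} (hn : ∀ a b, 0 ≤ q a b) {a b} (h : 0 < q a b) :
    0 < ∑ y, q a y :=
  lt_of_lt_of_le h (Finset.single_le_sum (fun y _ => hn a y) (Finset.mem_univ b))

lemma marg_pos_right {q : A → B → ℝ} (hn : ∀ a b, 0 ≤ q a b) {a b} (h : 0 < q a b) :
    0 < ∑ x, q x b :=
  lt_of_lt_of_le h (Finset.single_le_sum (fun x _ => hn x b) (Finset.mem_univ a))

lemma MI_nonneg {q : A → B → ℝ} (hq : IsDist2 q) : 0 ≤ MI q := by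
  rw [MI_eq]
  set r : A × B → ℝ := fun p => (∑ y, q p.1 y) * (∑ x, q x p.2) with hr
  have key : ∑ a, ∑ b, q a b *
      (Real.logb 2 (q a b) - Real.logb 2 (∑ y, q a y) - Real.logb 2 (∑ x, q x b))
      = ∑ p : A × B, q p.1 p.2 * (Real.logb 2 (q p.1 p.2) - Real.logb 2 (r p)) := by
    rw [Fintype.sum_prod_type]
    refine Finset.sum_congr rfl fun a _ => Finset.sum_congr rfl fun b _ => ?_
    rcases eq_or_lt_of_le (hq.nonneg a b) with h | h
    · rw [← h]; ring
    · have h1 := marg_pos_left hq.nonneg h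
      have h2 := marg_pos_right hq.nonneg h
      rw [hr]
      rw [Real.logb_mul (ne_of_gt h1) (ne_of_gt h2)]
      ring
  rw [key]
  refine kl_nonneg _ _ (fun p => hq.nonneg p.1 p.2) (fun p => mul_nonneg ?_ ?_) ?_ ?_
  · exact Finset.sum_nonneg fun y _ => hq.nonneg p.1 y
  · exact Finset.sum_nonneg fun x _ => hq.nonneg x p.2
  · intro p hp
    rcases mul_eq_zero.mp hp with h | h
    · by_contra hne
      have : 0 < q p.1 p.2 := lt_of_le_of_ne (hq.nonneg p.1 p.2) (Ne.symm hne)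
      exact absurd h (ne_of_gt (marg_pos_left hq.nonneg this))
    · by_contra hne
      have : 0 < q p.1 p.2 := lt_of_le_of_ne (hq.nonneg p.1 p.2) (Ne.symm hne)
      exact absurd h (ne_of_gt (marg_pos_right hq.nonneg this))
  · have hq1 : ∑ p : A × B, q p.1 p.2 = 1 := by
      rw [Fintype.sum_prod_type]; exact hq.sum_one
    have hr1 : ∑ p : A × B, r p = 1 := by
      rw [Fintype.sum_prod_type]
      have h1 : ∑ a, ∑ b, r (a, b) = (∑ a, ∑ y, q a y) * (∑ b, ∑ x, q x b) := by
        rw [Finset.sum_mul]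
        refine Finset.sum_congr rfl fun a _ => ?_
        rw [Finset.mul_sum]
      have h2 : ∑ b, ∑ x, q x b = 1 := by rw [Finset.sum_comm]; exact hq.sum_one
      rw [h1, hq.sum_one, h2, one_mul]
    rw [hq1, hr1]

lemma CMI_nonneg {q : A → B → C → ℝ} (hq : IsDist3 q) : 0 ≤ CMI q := by
  rw [CMI_eq]
  set qac : A → C → ℝ := fun a c => ∑ y, q a y c with hqac
  set qbc : B → C → ℝ := fun b c => ∑ x, q x b c with hqbc
  set qc : C → ℝ := fun c => ∑ x, ∑ y, q x y c with hqc
  have hqac_nn : ∀ a c, 0 ≤ qac a c := fun a c => Finset.sum_nonneg fun y _ => hq.nonneg a y c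
  have hqbc_nn : ∀ b c, 0 ≤ qbc b c := fun b c => Finset.sum_nonneg fun x _ => hq.nonneg x b c
  have hqc_nn : ∀ c, 0 ≤ qc c := fun c =>
    Finset.sum_nonneg fun x _ => Finset.sum_nonneg fun y _ => hq.nonneg x y c
  have hac_pos : ∀ {a b c}, 0 < q a b c → 0 < qac a c := fun {a b c} h =>
    lt_of_lt_of_le h (Finset.single_le_sum (fun y _ => hq.nonneg a y c) (Finset.mem_univ b))
  have hbc_pos : ∀ {a b c}, 0 < q a b c → 0 < qbc b c := fun {a b c} h =>
    lt_of_lt_of_le h (Finset.single_le_sum (fun x _ => hq.nonneg x b c) (Finset.mem_univ a))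
  have hac_le_c : ∀ a c, qac a c ≤ qc c := fun a c =>
    Finset.single_le_sum (f := fun x => qac x c) (fun x _ => hqac_nn x c) (Finset.mem_univ a)
  have hc_pos : ∀ {a b c}, 0 < q a b c → 0 < qc c := fun {a b c} h =>
    lt_of_lt_of_le (hac_pos h) (hac_le_c a c)
  set r : A × B × C → ℝ := fun p => qac p.1 p.2.2 * qbc p.2.1 p.2.2 / qc p.2.2 with hr
  have key : ∑ a, ∑ b, ∑ c, q a b c *
      (Real.logb 2 (q a b c) + Real.logb 2 (qc c) - Real.logb 2 (qac a c) - Real.logb 2 (qbc b c))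
      = ∑ p : A × B × C, q p.1 p.2.1 p.2.2 * (Real.logb 2 (q p.1 p.2.1 p.2.2) - Real.logb 2 (r p)) := by
    rw [Fintype.sum_prod_type]
    refine Finset.sum_congr rfl fun a _ => ?_
    rw [Fintype.sum_prod_type]
    refine Finset.sum_congr rfl fun b _ => Finset.sum_congr rfl fun c _ => ?_
    rcases eq_or_lt_of_le (hq.nonneg a b c) with h | h
    · rw [← h]; ring
    · rw [hr]
      simp only
      rw [Real.logb_div (ne_of_gt (mul_pos (hac_pos h) (hbc_pos h))) (ne_of_gt (hc_pos h)),
        Real.logb_mul (ne_of_gt (hac_pos h)) (ne_of_gt (hbc_pos h))]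
      ring
  rw [key]
  refine kl_nonneg _ _ (fun p => hq.nonneg _ _ _) (fun p => div_nonneg (mul_nonneg (hqac_nn _ _) (hqbc_nn _ _)) (hqc_nn _)) ?_ ?_
  · intro p hp
    by_contra hne
    have hpos : 0 < q p.1 p.2.1 p.2.2 :=
      lt_of_le_of_ne (hq.nonneg _ _ _) (Ne.symm hne)
    have : 0 < r p := by
      rw [hr]
      exact div_pos (mul_pos (hac_pos hpos) (hbc_pos hpos)) (hc_pos hpos)
    exact absurd hp (ne_of_gt this)
  · have hq1 : ∑ p : A × B × C, q p.1 p.2.1 p.2.2 = 1 := by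
      rw [Fintype.sum_prod_type]
      rw [Finset.sum_congr rfl fun a _ => Fintype.sum_prod_type _]
      exact hq.sum_one
    have hr1 : ∑ p : A × B × C, r p = 1 := by
      rw [Fintype.sum_prod_type]
      rw [Finset.sum_congr rfl fun a _ => Fintype.sum_prod_type _]
      have step : ∀ a, ∑ b, ∑ c, r (a, b, c) = ∑ c, qac a c * qc c / qc c := by
        intro a
        rw [Finset.sum_comm]
        refine Finset.sum_congr rfl fun c _ => ?_
        rw [hr]
        simp only
        rw [← Finset.sum_div, ← Finset.mul_sum]
        have hbc : ∑ i : B, qbc i c = qc c := by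
          rw [hqbc, hqc]
          exact Finset.sum_comm ..
        rw [hbc]
      rw [Finset.sum_congr rfl fun a _ => step a, Finset.sum_comm]
      have step2 : ∀ c, ∑ a, qac a c * qc c / qc c = qc c := by
        intro c
        rcases eq_or_ne (qc c) 0 with h | h
        · simp [h]
        · rw [← Finset.sum_div, ← Finset.sum_mul, mul_div_assoc, div_self h, mul_one]
      rw [Finset.sum_congr rfl fun c _ => step2 c]
      have hqc1 : ∑ c, qc c = 1 := by
        rw [hqc, Finset.sum_comm]
        rw [Finset.sum_congr rfl fun a _ => Finset.sum_comm ..]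
        exact hq.sum_one
      exact hqc1
    rw [hq1, hr1]

/-- The product-of-conditionals distribution. -/
def Q0 (p : A → B → C → ℝ) : A → B → C → ℝ :=
  fun a b c => (∑ z, p a b z) * (∑ y, p a y c) / (∑ y, ∑ z, p a y z)

lemma Q0_nonneg (p : A → B → C → ℝ) (hp : IsDist3 p) : ∀ a b c, 0 ≤ Q0 p a b c := by
  intro a b c
  unfold Q0
  have h1 : 0 ≤ ∑ z, p a b z := Finset.sum_nonneg fun z _ => hp.nonneg a b z
  have h2 : 0 ≤ ∑ y, p a y c := Finset.sum_nonneg fun y _ => hp.nonneg a y c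
  have h3 : 0 ≤ ∑ y, ∑ z, p a y z :=
    Finset.sum_nonneg fun y _ => Finset.sum_nonneg fun z _ => hp.nonneg a y z
  positivity

lemma Q0_marg_c (p : A → B → C → ℝ) (hp : IsDist3 p) :
    ∀ a b, ∑ c, Q0 p a b c = ∑ c, p a b c := by
  intro a b
  unfold Q0
  rw [← Finset.sum_div, ← Finset.mul_sum]
  have hswap : ∑ c, ∑ y, p a y c = ∑ y, ∑ z, p a y z := Finset.sum_comm ..
  rw [hswap]
  rcases eq_or_ne (∑ y, ∑ z, p a y z) 0 with h | h
  · have hb : ∑ z, p a b z = 0 := by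
      have hle : ∑ z, p a b z ≤ ∑ y, ∑ z, p a y z :=
        Finset.single_le_sum (f := fun y => ∑ z, p a y z)
          (fun y _ => Finset.sum_nonneg fun z _ => hp.nonneg a y z) (Finset.mem_univ b)
      have hge : 0 ≤ ∑ z, p a b z := Finset.sum_nonneg fun z _ => hp.nonneg a b z
      linarith [h ▸ hle]
    rw [h, hb]
    simp
  · rw [mul_div_assoc, div_self h, mul_one]

lemma Q0_marg_b (p : A → B → C → ℝ) (hp : IsDist3 p) :
    ∀ a c, ∑ b, Q0 p a b c = ∑ b, p a b c := by
  intro a c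
  unfold Q0
  rw [← Finset.sum_div, ← Finset.sum_mul]
  rcases eq_or_ne (∑ y, ∑ z, p a y z) 0 with h | h
  · have hb : ∑ b, p a b c = 0 := by
      have hle : ∀ b, ∑ z, p a b z ≤ ∑ y, ∑ z, p a y z := fun b =>
        Finset.single_le_sum (f := fun y => ∑ z, p a y z)
          (fun y _ => Finset.sum_nonneg fun z _ => hp.nonneg a y z) (Finset.mem_univ b)
      have : ∀ b, p a b c = 0 := by
        intro b
        have h1 : p a b c ≤ ∑ z, p a b z :=
          Finset.single_le_sum (fun z _ => hp.nonneg a b z) (Finset.mem_univ c)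
        have := hle b
        have := hp.nonneg a b c
        linarith [h ▸ hle b]
      simp [this]
    rw [h, hb]
    simp
  · rw [mul_comm, mul_div_assoc, div_self h, mul_one]

lemma Q0_isDist (p : A → B → C → ℝ) (hp : IsDist3 p) : IsDist3 (Q0 p) := by
  constructor
  · exact Q0_nonneg p hp
  · rw [Finset.sum_congr rfl fun a _ =>
      Finset.sum_congr rfl fun b _ => Q0_marg_c p hp a b]
    exact hp.sum_one

lemma CoI_Q0_nonneg (p : A → B → C → ℝ) (hp : IsDist3 p) : 0 ≤ CoI (Q0 p) := by
  set q := Q0 p with hqdef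
  have hdist : IsDist3 q := Q0_isDist p hp
  have hnn := hdist.nonneg
  have hmarg1 : ∀ a b, ∑ c, q a b c = ∑ c, p a b c := Q0_marg_c p hp
  have hmarg2 : ∀ a c, ∑ b, q a b c = ∑ b, p a b c := Q0_marg_b p hp
  have hm23 : IsDist2 (fun b c => ∑ a, q a b c) := by
    constructor
    · intro b c
      exact Finset.sum_nonneg fun a _ => hnn a b c
    · calc ∑ b, ∑ c, ∑ a, q a b c
          = ∑ b, ∑ a, ∑ c, q a b c := Finset.sum_congr rfl fun b _ => Finset.sum_comm ..
        _ = ∑ a, ∑ b, ∑ c, q a b c := Finset.sum_comm ..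
        _ = 1 := hdist.sum_one
  have key : CoI q = MI (fun b c => ∑ a, q a b c) := by
    have e1 : MI (fun a b => ∑ c, q a b c)
        = ∑ a, ∑ b, ∑ c, q a b c * (Real.logb 2 (∑ z, q a b z)
          - Real.logb 2 (∑ y, ∑ z, q a y z) - Real.logb 2 (∑ x, ∑ z, q x b z)) := by
      rw [MI_eq]
      exact Finset.sum_congr rfl fun a _ => Finset.sum_congr rfl fun b _ => Finset.sum_mul ..
    have e3 : MI (fun b c => ∑ a, q a b c)
        = ∑ a, ∑ b, ∑ c, q a b c * (Real.logb 2 (∑ x, q x b c)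
          - Real.logb 2 (∑ x, ∑ z, q x b z) - Real.logb 2 (∑ x, ∑ y, q x y c)) := by
      rw [MI_eq]
      have step : ∀ b c, (∑ a, q a b c) * (Real.logb 2 (∑ a, q a b c)
            - Real.logb 2 (∑ y, ∑ a, q a b y) - Real.logb 2 (∑ x, ∑ a, q a x c))
          = ∑ a, q a b c * (Real.logb 2 (∑ x, q x b c)
            - Real.logb 2 (∑ x, ∑ z, q x b z) - Real.logb 2 (∑ x, ∑ y, q x y c)) := by
        intro b c
        have h1 : ∑ y, ∑ a, q a b y = ∑ x, ∑ z, q x b z := Finset.sum_comm ..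
        have h2 : ∑ x : B, ∑ a, q a x c = ∑ x, ∑ y, q x y c := Finset.sum_comm ..
        rw [h1, h2, Finset.sum_mul]
      rw [Finset.sum_congr rfl fun b _ => Finset.sum_congr rfl fun c _ => step b c]
      calc ∑ b, ∑ c, ∑ a, (fun a b c => q a b c * (Real.logb 2 (∑ x, q x b c)
            - Real.logb 2 (∑ x, ∑ z, q x b z) - Real.logb 2 (∑ x, ∑ y, q x y c))) a b c
          = ∑ b, ∑ a, ∑ c, (fun a b c => q a b c * (Real.logb 2 (∑ x, q x b c)
            - Real.logb 2 (∑ x, ∑ z, q x b z) - Real.logb 2 (∑ x, ∑ y, q x y c))) a b c :=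
            Finset.sum_congr rfl fun b _ => Finset.sum_comm ..
        _ = ∑ a, ∑ b, ∑ c, (fun a b c => q a b c * (Real.logb 2 (∑ x, q x b c)
            - Real.logb 2 (∑ x, ∑ z, q x b z) - Real.logb 2 (∑ x, ∑ y, q x y c))) a b c :=
            Finset.sum_comm ..
    simp only [CoI]
    rw [e1, e3, CMI_eq]
    rw [← Finset.sum_sub_distrib]
    refine Finset.sum_congr rfl fun a _ => ?_
    rw [← Finset.sum_sub_distrib]
    refine Finset.sum_congr rfl fun b _ => ?_
    rw [← Finset.sum_sub_distrib]
    refine Finset.sum_congr rfl fun c _ => ?_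
    rcases eq_or_lt_of_le (hnn a b c) with h | h
    · rw [← h]; ring
    · -- positive case: use the structure of Q0
      have hP1 : 0 < ∑ z, p a b z := by
        by_contra hc
        push_neg at hc
        have h0 : ∑ z, p a b z = 0 :=
          le_antisymm hc (Finset.sum_nonneg fun z _ => hp.nonneg a b z)
        have : q a b c = 0 := by rw [hqdef]; unfold Q0; rw [h0]; simp
        linarith
      have hP2 : 0 < ∑ y, p a y c := by
        by_contra hc
        push_neg at hc
        have h0 : ∑ y, p a y c = 0 :=
          le_antisymm hc (Finset.sum_nonneg fun y _ => hp.nonneg a y c)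
        have : q a b c = 0 := by rw [hqdef]; unfold Q0; rw [h0]; simp
        linarith
      have hPA : 0 < ∑ y, ∑ z, p a y z := by
        rcases eq_or_ne (∑ y, ∑ z, p a y z) 0 with h0 | h0
        · exfalso
          have : q a b c = 0 := by rw [hqdef]; unfold Q0; rw [h0]; simp
          linarith
        · exact lt_of_le_of_ne (Finset.sum_nonneg fun y _ =>
            Finset.sum_nonneg fun z _ => hp.nonneg a y z) (Ne.symm h0)
      -- identify the q-marginals with p-marginals
      have m1 : ∑ z, q a b z = ∑ z, p a b z := hmarg1 a b
      have m2 : ∑ y, q a y c = ∑ y, p a y c := hmarg2 a c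
      have mA : ∑ y, ∑ z, q a y z = ∑ y, ∑ z, p a y z :=
        Finset.sum_congr rfl fun y _ => hmarg1 a y
      have hlogq : Real.logb 2 (q a b c) = Real.logb 2 (∑ z, p a b z)
          + Real.logb 2 (∑ y, p a y c) - Real.logb 2 (∑ y, ∑ z, p a y z) := by
        have : q a b c = (∑ z, p a b z) * (∑ y, p a y c) / (∑ y, ∑ z, p a y z) := rfl
        rw [this, Real.logb_div (ne_of_gt (mul_pos hP1 hP2)) (ne_of_gt hPA),
          Real.logb_mul (ne_of_gt hP1) (ne_of_gt hP2)]
      rw [m1, m2, mA, hlogq]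
      ring
  rw [key]
  exact MI_nonneg hm23

end Aux

/-- the quantities `UI~(X:Y\Z)`, `UI~(X:Z\Y)`, `SI~(X:Y;Z)` and `CI~(X:Y;Z)`
are all non-negative. -/
theorem UI_SI_CI_nonneg {X Y Z : Type*} [Fintype X] [Fintype Y] [Fintype Z]
    (p : X → Y → Z → ℝ) (hp : IsDist3 p) :
    0 ≤ UI p ∧ 0 ≤ UIr p ∧ 0 ≤ SI p ∧ 0 ≤ CI p := by
  refine ⟨?_, ?_, ?_, ?_⟩
  · apply Real.sInf_nonneg
    rintro x ⟨q, hqm, rfl⟩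
    exact CMI_nonneg hqm.1
  · apply Real.sInf_nonneg
    rintro x ⟨q, hqm, rfl⟩
    apply CMI_nonneg
    constructor
    · intro a c b
      exact hqm.1.nonneg a b c
    · calc ∑ a, ∑ c, ∑ b, q a b c
          = ∑ a, ∑ b, ∑ c, q a b c := Finset.sum_congr rfl fun a _ => Finset.sum_comm ..
        _ = 1 := hqm.1.sum_one
  · have hmem : Q0 p ∈ Delta p := ⟨Q0_isDist p hp, Q0_marg_c p hp, Q0_marg_b p hp⟩
    have h0 : 0 ≤ CoI (Q0 p) := CoI_Q0_nonneg p hp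
    have hbdd : BddAbove (CoI '' Delta p) := by
      refine ⟨MI (fun a b => ∑ c, p a b c), ?_⟩
      rintro x ⟨q, hqm, rfl⟩
      have h1 : (fun a b => ∑ c, q a b c) = (fun a b => ∑ c, p a b c) :=
        funext fun a => funext fun b => hqm.2.1 a b
      have h2 := CMI_nonneg hqm.1
      simp only [CoI, h1]
      linarith
    exact le_trans h0 (le_csSup hbdd ⟨Q0 p, hmem, rfl⟩)
  · have hpd : p ∈ Delta p := ⟨hp, fun a b => rfl, fun a c => rfl⟩
    have hbdd : BddBelow (MIpair '' Delta p) := by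
      refine ⟨0, ?_⟩
      rintro x ⟨q, hqm, rfl⟩
      unfold MIpair
      apply MI_nonneg
      constructor
      · intro a bc
        exact hqm.1.nonneg a bc.1 bc.2
      · rw [Finset.sum_congr rfl fun a _ => Fintype.sum_prod_type _]
        exact hqm.1.sum_one
    have hle : sInf (MIpair '' Delta p) ≤ MIpair p := csInf_le hbdd ⟨p, hpd, rfl⟩
    simp only [CI]
    linarith

end
end

section
/- There exist no functions I_\cap (defined on antichains of subsets of {Y_1,Y_2,Y_3} for a target X) and I_\partial satisfying: symmetry, self-redundancy (I_\cap(X:A) = MI(X:A)), the Williams–Beer monotonicity axiom, non-negativity of the Möbius inverse I_\partial on the PI lattice, and the identity axiom I_\cap((Y,Z):Y;Z) = MI(Y:Z). Concretely: in the example where Y_1, Y_2 are independent uniform bits, Y_3 = Y_1 XOR Y_2, and X = (Y_1,Y_2,Y_3), these axioms force I_\partial(X:{Y_1,Y_2};{Y_1,Y_3};{Y_2,Y_3}) \le 2 - 3 = -1 bit < 0, a contradiction. -/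
open scoped BigOperators Classical

noncomputable section

/-! The counterexample setting: sample space `Ω = Bool × Bool` with the uniform distribution;
the three predictor variables are `Y₁ = first bit`, `Y₂ = second bit`, `Y₃ = Y₁ XOR Y₂`. -/

/-- The uniform distribution on the sample space `Bool × Bool`. -/
def unif : Bool × Bool → ℝ := fun _ => 1/4

/-- The three predictor variables `Y₁, Y₂, Y₃`. -/
def Ysrc : Fin 3 → (Bool × Bool) → Bool
  | 0 => fun ω => ω.1
  | 1 => fun ω => ω.2
  | 2 => fun ω => xor ω.1 ω.2

/-- The random vector `(Y_i)_{i ∈ A}` for a subset `A ⊆ {1,2,3}`. -/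
def vecY (A : Finset (Fin 3)) : (Bool × Bool) → (A → Bool) :=
  fun ω i => Ysrc i.1 ω

/-- The joint distribution of two random variables on the uniform space `Bool × Bool`. -/
def jointD {T S : Type} [Fintype T] [Fintype S]
    (f : (Bool × Bool) → T) (g : (Bool × Bool) → S) : T → S → ℝ :=
  fun t s => ∑ ω : Bool × Bool, if f ω = t ∧ g ω = s then unif ω else 0

/-- The partial order of the PI lattice:
`α ≼ β` iff for each `B ∈ β` there is `A ∈ α` with `A ⊆ B`. -/
def PIle (α β : Finset (Finset (Fin 3))) : Prop :=
  ∀ B ∈ β, ∃ A ∈ α, A ⊆ B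

/-- `α` is a (nonempty) antichain of subsets of `{1,2,3}`. -/
def IsAC (α : Finset (Finset (Fin 3))) : Prop :=
  α.Nonempty ∧ ∀ A ∈ α, ∀ B ∈ α, A ⊆ B → A = B

/-! ### Auxiliary lemmas for the main theorem -/

lemma isAC_dec (α : Finset (Finset (Fin 3)))
    (h : α.Nonempty ∧ ∀ A ∈ α, ∀ B ∈ α, A ⊆ B → A = B) : IsAC α := h

lemma pIle_dec (α β : Finset (Finset (Fin 3)))
    (h : ∀ B ∈ β, ∃ A ∈ α, A ⊆ B) : PIle α β := h

/-- pushforward of the uniform distribution along `h`. -/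
def pushf {U : Type*} [Fintype U] (h : (Bool × Bool) → U) : U → ℝ :=
  fun u => ∑ ω, if h ω = u then unif ω else 0

lemma sum_pushf {U : Type*} [Fintype U] (h : (Bool × Bool) → U) :
    ∑ u, pushf h u = 1 := by
  unfold pushf
  rw [Finset.sum_comm]
  have h1 : ∀ ω : Bool × Bool, ∑ u : U, (if h ω = u then unif ω else 0) = unif ω := by
    intro ω; rw [Finset.sum_ite_eq]; simp
  rw [Finset.sum_congr rfl (fun ω _ => h1 ω)]
  unfold unif
  norm_num [unif, Finset.sum_const, Finset.card_univ]

lemma pushf_vals {U : Type*} [Fintype U] [DecidableEq U] (h : (Bool × Bool) → U) (k : ℕ)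
    (hk : ∀ ω, (Finset.univ.filter (fun ω' => h ω' = h ω)).card = k) (u : U) :
    pushf h u = 0 ∨ pushf h u = (k : ℝ) / 4 := by
  by_cases hu : ∃ ω, h ω = u
  · obtain ⟨ω₀, rfl⟩ := hu
    right
    have e : pushf h (h ω₀)
        = ∑ ω ∈ Finset.univ.filter (fun ω' => h ω' = h ω₀), unif ω := by
      unfold pushf; rw [Finset.sum_filter]
      refine Finset.sum_congr rfl fun a _ => ?_
      congr
    rw [e]
    simp only [unif, Finset.sum_const, hk ω₀, nsmul_eq_mul]
    ring
  · left
    refine Finset.sum_eq_zero fun ω _ => ?_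
    exact if_neg fun he => hu ⟨ω, he⟩

lemma ent_const {A : Type*} [Fintype A] (q : A → ℝ) (c : ℝ)
    (h : ∀ a, q a = 0 ∨ q a = c) (h1 : ∑ a, q a = 1) :
    ent q = -Real.logb 2 c := by
  unfold ent
  have h2 : ∀ a, q a * Real.logb 2 (q a) = q a * Real.logb 2 c := by
    intro a; rcases h a with ha | ha <;> rw [ha] <;> simp
  rw [Finset.sum_congr rfl (fun a _ => h2 a), ← Finset.sum_mul, h1, one_mul]

lemma ent_pushf {U : Type*} [Fintype U] [DecidableEq U] (h : (Bool × Bool) → U) (k : ℕ)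
    (hk : ∀ ω, (Finset.univ.filter (fun ω' => h ω' = h ω)).card = k) :
    ent (pushf h) = -Real.logb 2 ((k : ℝ) / 4) :=
  ent_const _ _ (pushf_vals h k hk) (sum_pushf h)

lemma jointD_fst {T S : Type} [Fintype T] [Fintype S]
    (f : (Bool × Bool) → T) (g : (Bool × Bool) → S) :
    (fun t => ∑ s, jointD f g t s) = pushf f := by
  funext t
  unfold jointD pushf
  rw [Finset.sum_comm]
  refine Finset.sum_congr rfl fun ω _ => ?_
  by_cases hf : f ω = t
  · simp [hf, Finset.sum_ite_eq]
  · simp [hf]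

lemma jointD_snd {T S : Type} [Fintype T] [Fintype S]
    (f : (Bool × Bool) → T) (g : (Bool × Bool) → S) :
    (fun s => ∑ t, jointD f g t s) = pushf g := by
  funext s
  unfold jointD pushf
  rw [Finset.sum_comm]
  refine Finset.sum_congr rfl fun ω _ => ?_
  by_cases hg : g ω = s
  · simp [hg, Finset.sum_ite_eq]
  · simp [hg]

lemma jointD_pair {T S : Type} [Fintype T] [Fintype S]
    (f : (Bool × Bool) → T) (g : (Bool × Bool) → S) :
    (fun p : T × S => jointD f g p.1 p.2) = pushf (fun ω => (f ω, g ω)) := by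
  funext p
  unfold jointD pushf
  refine Finset.sum_congr rfl fun ω _ => ?_
  simp [Prod.ext_iff]

lemma MI_jointD {T S : Type} [Fintype T] [Fintype S] [DecidableEq T] [DecidableEq S]
    (f : (Bool × Bool) → T) (g : (Bool × Bool) → S) (k1 k2 k3 : ℕ)
    (h1 : ∀ ω, (Finset.univ.filter (fun ω' => f ω' = f ω)).card = k1)
    (h2 : ∀ ω, (Finset.univ.filter (fun ω' => g ω' = g ω)).card = k2)
    (h3 : ∀ ω, (Finset.univ.filter (fun ω' => (f ω', g ω') = (f ω, g ω))).card = k3) :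
    MI (jointD f g)
      = -Real.logb 2 ((k1 : ℝ)/4) - Real.logb 2 ((k2 : ℝ)/4) + Real.logb 2 ((k3 : ℝ)/4) := by
  unfold MI ent2
  rw [jointD_fst f g, jointD_snd f g, jointD_pair f g,
      ent_pushf f k1 h1, ent_pushf g k2 h2, ent_pushf _ k3 h3]
  ring

lemma logb_inv_two : Real.logb 2 ((2:ℝ)⁻¹) = -1 := by
  rw [Real.logb_inv]
  norm_num [Real.logb_self_eq_one]

lemma logb_inv_four : Real.logb 2 ((4:ℝ)⁻¹) = -2 := by
  rw [show (4:ℝ) = (2:ℝ)^(2:ℕ) by norm_num, Real.logb_inv, Real.logb_pow]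
  norm_num [Real.logb_self_eq_one]

lemma MI_id_Y01 : MI (jointD (id : Bool × Bool → Bool × Bool) (vecY {0,1})) = 2 := by
  rw [MI_jointD _ _ 1 1 1 (by decide) (by decide) (by decide),
    show ((1:ℕ) : ℝ)/4 = (4:ℝ)⁻¹ by norm_num, logb_inv_four]
  norm_num

lemma MI_Y0_Y1 : MI (jointD (vecY {0}) (vecY {1})) = 0 := by
  rw [MI_jointD _ _ 2 2 1 (by decide) (by decide) (by decide),
    show ((1:ℕ) : ℝ)/4 = (4:ℝ)⁻¹ by norm_num,
    show ((2:ℕ) : ℝ)/4 = (2:ℝ)⁻¹ by norm_num, logb_inv_four, logb_inv_two]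
  norm_num

lemma MI_Y0_Y2 : MI (jointD (vecY {0}) (vecY {2})) = 0 := by
  rw [MI_jointD _ _ 2 2 1 (by decide) (by decide) (by decide),
    show ((1:ℕ) : ℝ)/4 = (4:ℝ)⁻¹ by norm_num,
    show ((2:ℕ) : ℝ)/4 = (2:ℝ)⁻¹ by norm_num, logb_inv_four, logb_inv_two]
  norm_num

lemma MI_Y1_Y2 : MI (jointD (vecY {1}) (vecY {2})) = 0 := by
  rw [MI_jointD _ _ 2 2 1 (by decide) (by decide) (by decide),
    show ((1:ℕ) : ℝ)/4 = (4:ℝ)⁻¹ by norm_num,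
    show ((2:ℕ) : ℝ)/4 = (2:ℝ)⁻¹ by norm_num, logb_inv_four, logb_inv_two]
  norm_num

lemma MI_Y0_Y12 : MI (jointD (vecY {0}) (vecY {1,2})) = 1 := by
  rw [MI_jointD _ _ 2 1 1 (by decide) (by decide) (by decide),
    show ((1:ℕ) : ℝ)/4 = (4:ℝ)⁻¹ by norm_num,
    show ((2:ℕ) : ℝ)/4 = (2:ℝ)⁻¹ by norm_num, logb_inv_four, logb_inv_two]
  norm_num

lemma MI_Y1_Y02 : MI (jointD (vecY {1}) (vecY {0,2})) = 1 := by
  rw [MI_jointD _ _ 2 1 1 (by decide) (by decide) (by decide),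
    show ((1:ℕ) : ℝ)/4 = (4:ℝ)⁻¹ by norm_num,
    show ((2:ℕ) : ℝ)/4 = (2:ℝ)⁻¹ by norm_num, logb_inv_four, logb_inv_two]
  norm_num

lemma MI_Y2_Y01 : MI (jointD (vecY {2}) (vecY {0,1})) = 1 := by
  rw [MI_jointD _ _ 2 1 1 (by decide) (by decide) (by decide),
    show ((1:ℕ) : ℝ)/4 = (4:ℝ)⁻¹ by norm_num,
    show ((2:ℕ) : ℝ)/4 = (2:ℝ)⁻¹ by norm_num, logb_inv_four, logb_inv_two]
  norm_num

lemma pIle_trans {a b c : Finset (Finset (Fin 3))} (hab : PIle a b) (hbc : PIle b c) :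
    PIle a c := by
  intro B hB
  obtain ⟨A, hA, hAB⟩ := hbc B hB
  obtain ⟨A', hA', hA'A⟩ := hab A hA
  exact ⟨A', hA', hA'A.trans hAB⟩

/-- there are no functions `I∩` (defined for every target random variable and
every antichain of subsets of `{Y₁,Y₂,Y₃}`) and `I∂` satisfying self-redundancy
(`I∩(X:A) = MI(X:A)`), the Williams–Beer monotonicity axiom (equivalently, monotonicity on
the PI lattice; symmetry is built into the use of finite set arguments), non-negativity of
the Möbius inverse `I∂` on the PI lattice (local positivity), the identity axiom
`I∩((Y_A,Y_B):A;B) = MI(Y_A:Y_B)`, and dependence on the target only through the partition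
it induces (invariance under relabelings).  The axioms fail already in the example where
`Y₁, Y₂` are independent uniform bits, `Y₃ = Y₁ XOR Y₂` and `X = (Y₁,Y₂,Y₃)`, where they
force `I∂(X:{Y₁,Y₂};{Y₁,Y₃};{Y₂,Y₃}) ≤ 2 - 3 = -1` bit `< 0`. -/
theorem no_nonneg_PI_decomposition_with_identity :
    ¬ ∃ (Icap Ipart :
        ∀ (T : Type) [Fintype T], ((Bool × Bool) → T) → Finset (Finset (Fin 3)) → ℝ),
      -- self-redundancy
      (∀ (T : Type) [Fintype T] (X : (Bool × Bool) → T) (A : Finset (Fin 3)),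
        Icap T X {A} = MI (jointD X (vecY A))) ∧
      -- monotonicity on the PI lattice
      (∀ (T : Type) [Fintype T] (X : (Bool × Bool) → T) (α β : Finset (Finset (Fin 3))),
        IsAC α → IsAC β → PIle α β → Icap T X α ≤ Icap T X β) ∧
      -- Möbius inversion relating I∩ and I∂
      (∀ (T : Type) [Fintype T] (X : (Bool × Bool) → T) (α : Finset (Finset (Fin 3))),
        IsAC α →
        Icap T X α
          = ∑ β ∈ Finset.univ.filter (fun β => IsAC β ∧ PIle β α), Ipart T X β) ∧
      -- local positivity
      (∀ (T : Type) [Fintype T] (X : (Bool × Bool) → T) (β : Finset (Finset (Fin 3))),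
        IsAC β → 0 ≤ Ipart T X β) ∧
      -- identity axiom
      (∀ A B : Finset (Fin 3),
        Icap ((A → Bool) × (B → Bool)) (fun ω => (vecY A ω, vecY B ω)) ({A, B} : Finset (Finset (Fin 3)))
          = MI (jointD (vecY A) (vecY B))) ∧
      -- the value of I∩ depends on the target only through the partition it induces
      (∀ (T T' : Type) [Fintype T] [Fintype T']
        (X : (Bool × Bool) → T) (X' : (Bool × Bool) → T'),
        (∀ ω ω', X ω = X ω' ↔ X' ω = X' ω') →
        ∀ α, Icap T X α = Icap T' X' α) := by
  rintro ⟨Icap, Ipart, hself, hmono, hmob, hpos, hid, hinv⟩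
  -- the target is `X = id : Bool × Bool → Bool × Bool`
  have hIid : ∀ A B : Finset (Fin 3),
      (∀ ω ω' : Bool × Bool,
        ((vecY A ω, vecY B ω) = (vecY A ω', vecY B ω')) ↔ ω = ω') →
      Icap (Bool × Bool) id ({A, B} : Finset (Finset (Fin 3)))
        = MI (jointD (vecY A) (vecY B)) := by
    intro A B hAB
    rw [← hid A B]
    exact (hinv _ _ _ id (fun ω ω' => by simpa using hAB ω ω') _).symm
  -- shorthand for the down-sets appearing in the Möbius inversion
  set D : Finset (Finset (Fin 3)) → Finset (Finset (Finset (Fin 3))) :=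
    fun α => Finset.univ.filter (fun β => IsAC β ∧ PIle β α) with hD
  -- the Möbius sums
  have hsum : ∀ α : Finset (Finset (Fin 3)), IsAC α →
      Icap (Bool × Bool) id α = ∑ β ∈ D α, Ipart (Bool × Bool) id β :=
    fun α h => hmob (Bool × Bool) id α h
  -- antichain facts
  have ac1 : IsAC ({{0},{1,2}} : Finset (Finset (Fin 3))) := isAC_dec _ (by decide)
  have ac2 : IsAC ({{1},{0,2}} : Finset (Finset (Fin 3))) := isAC_dec _ (by decide)
  have ac3 : IsAC ({{2},{0,1}} : Finset (Finset (Fin 3))) := isAC_dec _ (by decide)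
  have ac12 : IsAC ({{0},{1}} : Finset (Finset (Fin 3))) := isAC_dec _ (by decide)
  have ac13 : IsAC ({{0},{2}} : Finset (Finset (Fin 3))) := isAC_dec _ (by decide)
  have ac23 : IsAC ({{1},{2}} : Finset (Finset (Fin 3))) := isAC_dec _ (by decide)
  have acγ : IsAC ({{0,1},{0,2},{1,2}} : Finset (Finset (Fin 3))) := isAC_dec _ (by decide)
  have acT : IsAC ({{0,1}} : Finset (Finset (Fin 3))) := isAC_dec _ (by decide)
  -- values of I∩ for the target id
  have v1 : Icap (Bool × Bool) id {{0},{1,2}} = 1 := by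
    rw [hIid {0} {1,2} (by decide)]; exact MI_Y0_Y12
  have v2 : Icap (Bool × Bool) id {{1},{0,2}} = 1 := by
    rw [hIid {1} {0,2} (by decide)]; exact MI_Y1_Y02
  have v3 : Icap (Bool × Bool) id {{2},{0,1}} = 1 := by
    rw [hIid {2} {0,1} (by decide)]; exact MI_Y2_Y01
  have z12 : Icap (Bool × Bool) id {{0},{1}} = 0 := by
    rw [hIid {0} {1} (by decide)]; exact MI_Y0_Y1
  have z13 : Icap (Bool × Bool) id {{0},{2}} = 0 := by
    rw [hIid {0} {2} (by decide)]; exact MI_Y0_Y2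
  have z23 : Icap (Bool × Bool) id {{1},{2}} = 0 := by
    rw [hIid {1} {2} (by decide)]; exact MI_Y1_Y2
  -- the upper bound `I∩(X : γ) ≤ 2`
  have hγ2 : Icap (Bool × Bool) id {{0,1},{0,2},{1,2}} ≤ 2 := by
    have hm := hmono (Bool × Bool) id {{0,1},{0,2},{1,2}} {{0,1}} acγ acT
      (pIle_dec _ _ (by decide))
    have hv : Icap (Bool × Bool) id {{0,1}} = 2 := by
      rw [hself (Bool × Bool) id ({0,1} : Finset (Fin 3))]; exact MI_id_Y01
    linarith
  -- `I∂` vanishes on the down-set of any antichain where `I∩` vanishes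
  have hFz : ∀ δ : Finset (Finset (Fin 3)), IsAC δ → Icap (Bool × Bool) id δ = 0 →
      ∀ β ∈ D δ, Ipart (Bool × Bool) id β = 0 := by
    intro δ hδ h0 β hβ
    have hs : ∑ β ∈ D δ, Ipart (Bool × Bool) id β = 0 := by
      rw [← hsum δ hδ]; exact h0
    exact (Finset.sum_eq_zero_iff_of_nonneg
      (fun β' hβ' => hpos _ id β' (Finset.mem_filter.mp hβ').2.1)).mp hs β hβ
  -- monotonicity of `D`
  have hDsub : ∀ {α α' : Finset (Finset (Fin 3))}, PIle α α' → D α ⊆ D α' := by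
    intro α α' h β hβ
    obtain ⟨-, hac, hle⟩ := Finset.mem_filter.mp hβ
    exact Finset.mem_filter.mpr ⟨Finset.mem_univ _, hac, pIle_trans hle h⟩
  -- intersections of the down-sets
  have hint : ∀ (C₁ C₂ c₁ c₂ : Finset (Fin 3)) (β : Finset (Finset (Fin 3))),
      c₁ ∈ ({c₁, C₁} : Finset (Finset (Fin 3))) → c₂ ∈ ({c₂, C₂} : Finset (Finset (Fin 3))) →
      β ∈ D {c₁, C₁} → β ∈ D {c₂, C₂} → β ∈ D {c₁, c₂} := by
    intro C₁ C₂ c₁ c₂ β hc₁ hc₂ h1 h2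
    obtain ⟨-, hac, hle1⟩ := Finset.mem_filter.mp h1
    obtain ⟨-, -, hle2⟩ := Finset.mem_filter.mp h2
    refine Finset.mem_filter.mpr ⟨Finset.mem_univ _, hac, ?_⟩
    intro B hB
    have hB' : B = c₁ ∨ B = c₂ := by simpa using hB
    rcases hB' with rfl | rfl
    · exact hle1 B hc₁
    · exact hle2 B hc₂
  -- the three Möbius sums are 1
  have s1 : ∑ β ∈ D {{0},{1,2}}, Ipart (Bool × Bool) id β = 1 := (hsum _ ac1).symm.trans v1
  have s2 : ∑ β ∈ D {{1},{0,2}}, Ipart (Bool × Bool) id β = 1 := (hsum _ ac2).symm.trans v2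
  have s3 : ∑ β ∈ D {{2},{0,1}}, Ipart (Bool × Bool) id β = 1 := (hsum _ ac3).symm.trans v3
  -- sum over the union of the first two down-sets
  have e12 : ∑ β ∈ D {{0},{1,2}} ∪ D {{1},{0,2}}, Ipart (Bool × Bool) id β = 2 := by
    have hi : ∑ β ∈ D {{0},{1,2}} ∩ D {{1},{0,2}}, Ipart (Bool × Bool) id β = 0 :=
      Finset.sum_eq_zero fun β hβ => hFz {{0},{1}} ac12 z12 β
        (hint {1,2} {0,2} {0} {1} β (by decide) (by decide)
          (Finset.mem_inter.mp hβ).1 (Finset.mem_inter.mp hβ).2)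
    have hu := Finset.sum_union_inter (s₁ := D {{0},{1,2}}) (s₂ := D {{1},{0,2}})
      (f := fun β => Ipart (Bool × Bool) id β)
    linarith
  -- sum over the triple union
  have e123 : ∑ β ∈ (D {{0},{1,2}} ∪ D {{1},{0,2}}) ∪ D {{2},{0,1}},
      Ipart (Bool × Bool) id β = 3 := by
    have hi : ∑ β ∈ (D {{0},{1,2}} ∪ D {{1},{0,2}}) ∩ D {{2},{0,1}},
        Ipart (Bool × Bool) id β = 0 := by
      refine Finset.sum_eq_zero fun β hβ => ?_
      obtain ⟨hu, h3⟩ := Finset.mem_inter.mp hβ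
      rcases Finset.mem_union.mp hu with h1 | h2
      · exact hFz {{0},{2}} ac13 z13 β (hint {1,2} {0,1} {0} {2} β (by decide) (by decide) h1 h3)
      · exact hFz {{1},{2}} ac23 z23 β (hint {0,2} {0,1} {1} {2} β (by decide) (by decide) h2 h3)
    have hu := Finset.sum_union_inter (s₁ := D {{0},{1,2}} ∪ D {{1},{0,2}})
      (s₂ := D {{2},{0,1}}) (f := fun β => Ipart (Bool × Bool) id β)
    linarith
  -- the lower bound `3 ≤ I∩(X : γ)`
  have hle3 : (3:ℝ) ≤ Icap (Bool × Bool) id {{0,1},{0,2},{1,2}} := by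
    rw [hsum _ acγ]
    have hsub : (D {{0},{1,2}} ∪ D {{1},{0,2}}) ∪ D {{2},{0,1}}
        ⊆ D {{0,1},{0,2},{1,2}} :=
      Finset.union_subset
        (Finset.union_subset (hDsub (pIle_dec _ _ (by decide))) (hDsub (pIle_dec _ _ (by decide))))
        (hDsub (pIle_dec _ _ (by decide)))
    calc (3:ℝ) = ∑ β ∈ (D {{0},{1,2}} ∪ D {{1},{0,2}}) ∪ D {{2},{0,1}},
          Ipart (Bool × Bool) id β := e123.symm
      _ ≤ ∑ β ∈ D {{0,1},{0,2},{1,2}}, Ipart (Bool × Bool) id β :=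
          Finset.sum_le_sum_of_subset_of_nonneg hsub
            (fun β hβ _ => hpos _ id β (Finset.mem_filter.mp hβ).2.1)
  linarith

end
end

section
/- \widetilde{UI}(X:(Y,Y')\setminus Z) \ge \widetilde{UI}(X:Y\setminus Z): enlarging the informative variable does not decrease unique information. -/
open scoped BigOperators Classical

noncomputable section

/-- Gibbs' inequality (cross-entropy form). -/
lemma gibbs {A : Type*} [Fintype A] (q r : A → ℝ) (hq : ∀ a, 0 ≤ q a)
    (hr : ∀ a, 0 ≤ r a) (hqr : ∀ a, q a ≠ 0 → r a ≠ 0)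
    (hsum : ∑ a, r a ≤ ∑ a, q a) :
    ∑ a, q a * Real.logb 2 (r a) ≤ ∑ a, q a * Real.logb 2 (q a) := by
  have h2 : (0:ℝ) < Real.log 2 := Real.log_pos (by norm_num)
  have key : ∀ a, q a * Real.logb 2 (r a) - q a * Real.logb 2 (q a) ≤ (r a - q a) / Real.log 2 := by
    intro a
    rcases eq_or_lt_of_le (hq a) with h | h
    · rw [← h]
      simp only [zero_mul, sub_zero, sub_self]
      exact div_nonneg (by simpa using hr a) h2.le
    · have hra : 0 < r a := lt_of_le_of_ne (hr a) (Ne.symm (hqr a (ne_of_gt h)))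
      have hlog := Real.log_le_sub_one_of_pos (show 0 < r a / q a by positivity)
      rw [Real.log_div (ne_of_gt hra) (ne_of_gt h)] at hlog
      have hmul : q a * (Real.log (r a) - Real.log (q a)) ≤ r a - q a := by
        have h1 := mul_le_mul_of_nonneg_left hlog (le_of_lt h)
        calc q a * (Real.log (r a) - Real.log (q a)) ≤ q a * (r a / q a - 1) := h1
          _ = r a - q a := by field_simp
      simp only [Real.logb]
      rw [show q a * (Real.log (r a) / Real.log 2) - q a * (Real.log (q a) / Real.log 2)
          = (q a * (Real.log (r a) - Real.log (q a))) / Real.log 2 by ring]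
      exact div_le_div_of_nonneg_right hmul h2.le
  have hs : ∑ a, (q a * Real.logb 2 (r a) - q a * Real.logb 2 (q a))
      ≤ ∑ a, (r a - q a) / Real.log 2 := Finset.sum_le_sum (fun a _ => key a)
  rw [Finset.sum_sub_distrib] at hs
  have heq : ∑ a, (r a - q a) / Real.log 2 = (∑ a, r a - ∑ a, q a) / Real.log 2 := by
    rw [← Finset.sum_div, Finset.sum_sub_distrib]
  rw [heq] at hs
  have hle : (∑ a, r a - ∑ a, q a) / Real.log 2 ≤ 0 :=
    div_nonpos_iff.mpr (Or.inr ⟨by linarith, h2.le⟩)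
  linarith

lemma ent_equiv {A B : Type*} [Fintype A] [Fintype B] (e : A ≃ B) (f : B → ℝ) :
    ent (fun a => f (e a)) = ent f := by
  unfold ent
  exact congrArg Neg.neg (Equiv.sum_comp e (fun b => f b * Real.logb 2 (f b)))

lemma flat3 {A B C : Type*} [Fintype A] [Fintype B] [Fintype C] (f : A → B → C → ℝ) :
    ∑ p : A × B × C, f p.1 p.2.1 p.2.2 = ∑ a, ∑ b, ∑ c, f a b c := by
  rw [Fintype.sum_prod_type]
  exact Finset.sum_congr rfl fun a _ => Fintype.sum_prod_type _

lemma sum_rot {A B C M : Type*} [Fintype A] [Fintype B] [Fintype C] [AddCommMonoid M]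
    (f : A → B → C → M) :
    ∑ a, ∑ b, ∑ c, f a b c = ∑ c, ∑ a, ∑ b, f a b c := by
  calc ∑ a, ∑ b, ∑ c, f a b c = ∑ a, ∑ c, ∑ b, f a b c :=
        Finset.sum_congr rfl fun a _ => Finset.sum_comm
    _ = ∑ c, ∑ a, ∑ b, f a b c := Finset.sum_comm

/-- Nonnegativity of conditional mutual information. -/
lemma cmi_nonneg {A B C : Type*} [Fintype A] [Fintype B] [Fintype C]
    {q : A → B → C → ℝ} (h : IsDist3 q) : 0 ≤ CMI q := by
  classical
  set qac : A → C → ℝ := fun a c => ∑ b, q a b c with hqac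
  set qbc : B → C → ℝ := fun b c => ∑ a, q a b c with hqbc
  set qc : C → ℝ := fun c => ∑ a, ∑ b, q a b c with hqc
  have hqn := h.nonneg
  have hacn : ∀ a c, 0 ≤ qac a c := fun a c => Finset.sum_nonneg fun b _ => hqn a b c
  have hbcn : ∀ b c, 0 ≤ qbc b c := fun b c => Finset.sum_nonneg fun a _ => hqn a b c
  have hcn : ∀ c, 0 ≤ qc c := fun c =>
    Finset.sum_nonneg fun a _ => Finset.sum_nonneg fun b _ => hqn a b c
  have hac_pos : ∀ a b c, 0 < q a b c → 0 < qac a c := fun a b c hp =>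
    lt_of_lt_of_le hp (Finset.single_le_sum (fun b _ => hqn a b c) (Finset.mem_univ b))
  have hbc_pos : ∀ a b c, 0 < q a b c → 0 < qbc b c := fun a b c hp =>
    lt_of_lt_of_le hp (Finset.single_le_sum (fun a _ => hqn a b c) (Finset.mem_univ a))
  have hc_pos : ∀ a b c, 0 < q a b c → 0 < qc c := fun a b c hp =>
    lt_of_lt_of_le (hac_pos a b c hp)
      (Finset.single_le_sum (fun a _ => hacn a c) (Finset.mem_univ a))
  set Q : A × B × C → ℝ := fun p => q p.1 p.2.1 p.2.2 with hQ
  set R : A × B × C → ℝ := fun p => qac p.1 p.2.2 * qbc p.2.1 p.2.2 / qc p.2.2 with hR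
  have hQn : ∀ p, 0 ≤ Q p := fun p => hqn _ _ _
  have hRn : ∀ p, 0 ≤ R p := fun p => div_nonneg (mul_nonneg (hacn _ _) (hbcn _ _)) (hcn _)
  have hQR : ∀ p, Q p ≠ 0 → R p ≠ 0 := by
    rintro ⟨a, b, c⟩ hne
    have hp : 0 < q a b c := lt_of_le_of_ne (hqn a b c) (Ne.symm hne)
    have := hac_pos a b c hp; have := hbc_pos a b c hp; have := hc_pos a b c hp
    simp only [hR]
    positivity
  have hqcsum : ∑ c, qc c = 1 := by
    simp only [hqc]
    rw [← sum_rot]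
    exact h.sum_one
  have hQsum : ∑ p, Q p = 1 := by
    simp only [hQ]
    exact (flat3 q).trans h.sum_one
  have hRsum : ∑ p, R p ≤ ∑ p, Q p := by
    rw [hQsum]
    simp only [hR]
    rw [flat3 (fun a b c => qac a c * qbc b c / qc c), sum_rot]
    have h3 : ∀ c, ∑ a, ∑ b, qac a c * qbc b c / qc c ≤ qc c := by
      intro c
      have e1 : ∑ a, ∑ b, qac a c * qbc b c / qc c
          = (∑ a, qac a c) * (∑ b, qbc b c) / qc c := by
        rw [Finset.sum_mul, Finset.sum_div]
        refine Finset.sum_congr rfl fun a _ => ?_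
        rw [Finset.mul_sum, Finset.sum_div]
      have e2 : (∑ a, qac a c) = qc c := by simp only [hqac, hqc]
      have e3 : (∑ b, qbc b c) = qc c := by
        simp only [hqbc, hqc]; exact Finset.sum_comm
      rw [e1, e2, e3]
      rcases eq_or_lt_of_le (hcn c) with hz | hpos
      · rw [← hz]; simp
      · rw [mul_div_assoc, div_self (ne_of_gt hpos), mul_one]
    calc ∑ c, ∑ a, ∑ b, qac a c * qbc b c / qc c ≤ ∑ c, qc c :=
          Finset.sum_le_sum fun c _ => h3 c
      _ = 1 := hqcsum
  have main := gibbs Q R hQn hRn hQR hRsum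
  -- rewrite ∑ Q * logb R
  have hsplit : ∑ p, Q p * Real.logb 2 (R p)
      = ∑ p : A × B × C, (Q p * Real.logb 2 (qac p.1 p.2.2)
          + Q p * Real.logb 2 (qbc p.2.1 p.2.2) - Q p * Real.logb 2 (qc p.2.2)) := by
    refine Finset.sum_congr rfl ?_
    rintro ⟨a, b, c⟩ _
    rcases eq_or_lt_of_le (hqn a b c) with hz | hpos
    · simp only [hQ, hR, ← hz, zero_mul, add_zero, sub_zero, zero_add, zero_sub, neg_zero]
    · have h1 := hac_pos a b c hpos
      have h2 := hbc_pos a b c hpos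
      have h3 := hc_pos a b c hpos
      simp only [hQ, hR]
      rw [Real.logb_div (by positivity) (ne_of_gt h3), Real.logb_mul (ne_of_gt h1) (ne_of_gt h2)]
      ring
  -- identify entropy terms
  have eac : ent2 qac = -∑ p : A × B × C, Q p * Real.logb 2 (qac p.1 p.2.2) := by
    unfold ent2 ent
    congr 1
    simp only [hQ]
    rw [flat3 (fun a b c => q a b c * Real.logb 2 (qac a c)), Fintype.sum_prod_type]
    refine Finset.sum_congr rfl fun a _ => ?_
    rw [Finset.sum_comm]
    refine Finset.sum_congr rfl fun c _ => ?_
    simp only [hqac]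
    exact Finset.sum_mul _ _ _
  have ebc : ent2 qbc = -∑ p : A × B × C, Q p * Real.logb 2 (qbc p.2.1 p.2.2) := by
    unfold ent2 ent
    congr 1
    simp only [hQ]
    rw [flat3 (fun a b c => q a b c * Real.logb 2 (qbc b c)), Finset.sum_comm,
      Fintype.sum_prod_type]
    refine Finset.sum_congr rfl fun b _ => ?_
    rw [Finset.sum_comm]
    refine Finset.sum_congr rfl fun c _ => ?_
    simp only [hqbc]
    exact Finset.sum_mul _ _ _
  have ec : ent qc = -∑ p : A × B × C, Q p * Real.logb 2 (qc p.2.2) := by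
    unfold ent
    congr 1
    simp only [hQ]
    rw [flat3 (fun a b c => q a b c * Real.logb 2 (qc c)), sum_rot]
    refine Finset.sum_congr rfl fun c _ => ?_
    simp only [hqc]
    rw [Finset.sum_mul]
    exact Finset.sum_congr rfl fun a _ => Finset.sum_mul _ _ _
  have eq3 : ent3 q = -∑ p, Q p * Real.logb 2 (Q p) := rfl
  have hfinal : ∑ p, Q p * Real.logb 2 (R p)
      = -ent2 qac - ent2 qbc + ent qc := by
    rw [hsplit, eac, ebc, ec]
    rw [Finset.sum_sub_distrib, Finset.sum_add_distrib]
    ring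
  unfold CMI
  rw [← hqac, ← hqbc, ← hqc, eq3]
  linarith [main, hfinal]

lemma sum_prod_split {Y Y' Z M : Type*} [Fintype Y] [Fintype Y'] [Fintype Z] [AddCommMonoid M]
    (f : Y × Y' → Z → M) :
    ∑ b : Y × Y', ∑ z, f b z = ∑ y, ∑ y', ∑ z, f (y, y') z := by
  rw [Fintype.sum_prod_type]

/-- chain: marginalizing the middle variable cannot increase CMI. -/
lemma cmi_marg_le {X Y Y' Z : Type*} [Fintype X] [Fintype Y] [Fintype Y'] [Fintype Z]
    (q : X → (Y × Y') → Z → ℝ) (hq : IsDist3 q) :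
    CMI (fun x y z => ∑ y', q x (y, y') z) ≤ CMI q := by
  classical
  set q' : X → Y' → (Y × Z) → ℝ := fun x y' c => q x (c.1, y') c.2 with hq'
  have hq'dist : IsDist3 q' := by
    refine ⟨fun a b c => hq.nonneg _ _ _, ?_⟩
    rw [← hq.sum_one]
    refine Finset.sum_congr rfl fun x _ => ?_
    calc ∑ y', ∑ c : Y × Z, q' x y' c = ∑ y', ∑ y, ∑ z, q x (y, y') z := by
          refine Finset.sum_congr rfl fun y' _ => ?_
          simp only [hq']
          exact Fintype.sum_prod_type _
      _ = ∑ y, ∑ y', ∑ z, q x (y, y') z := Finset.sum_comm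
      _ = ∑ b : Y × Y', ∑ z, q x b z := (sum_prod_split (fun b z => q x b z)).symm
  have h0 : 0 ≤ CMI q' := cmi_nonneg hq'dist
  have Ea4 : ent3 q' = ent3 q := by
    have := ent_equiv
      (⟨fun p : X × Y' × (Y × Z) => (p.1, (p.2.2.1, p.2.1), p.2.2.2),
        fun p : X × (Y × Y') × Z => (p.1, p.2.1.2, (p.2.1.1, p.2.2)),
        fun ⟨x, y', y, z⟩ => rfl, fun ⟨x, ⟨y, y'⟩, z⟩ => rfl⟩ :
          X × Y' × (Y × Z) ≃ X × (Y × Y') × Z)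
      (fun p : X × (Y × Y') × Z => q p.1 p.2.1 p.2.2)
    exact this
  have Ea2 : ent2 (fun y' (c : Y × Z) => ∑ x, q' x y' c)
      = ent2 (fun (b : Y × Y') z => ∑ x, q x b z) := by
    have := ent_equiv
      (⟨fun p : Y' × (Y × Z) => ((p.2.1, p.1), p.2.2),
        fun p : (Y × Y') × Z => (p.1.2, (p.1.1, p.2)),
        fun ⟨y', y, z⟩ => rfl, fun ⟨⟨y, y'⟩, z⟩ => rfl⟩ :
          Y' × (Y × Z) ≃ (Y × Y') × Z)
      (fun p : (Y × Y') × Z => ∑ x, q x p.1 p.2)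
    exact this
  have Eb4 : ent3 (fun x y z => ∑ y', q x (y, y') z)
      = ent2 (fun x (c : Y × Z) => ∑ y', q' x y' c) := rfl
  have Eb2 : ent2 (fun (y : Y) (z : Z) => ∑ x, ∑ y', q x (y, y') z)
      = ent (fun c : Y × Z => ∑ x, ∑ y', q' x y' c) := rfl
  have E1 : ent2 (fun x z => ∑ b : Y × Y', q x b z)
      = ent2 (fun x z => ∑ y, ∑ y', q x (y, y') z) := by
    unfold ent2
    congr 1
    funext p
    simp only [Fintype.sum_prod_type]
  have E3 : ent (fun z => ∑ x, ∑ b : Y × Y', q x b z)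
      = ent (fun z => ∑ x, ∑ y, ∑ y', q x (y, y') z) := by
    congr 1
    funext z
    refine Finset.sum_congr rfl fun x _ => ?_
    simp only [Fintype.sum_prod_type]
  have hkey : CMI q = CMI (fun x y z => ∑ y', q x (y, y') z) + CMI q' := by
    unfold CMI
    rw [← Ea4, ← Ea2, ← E1, ← E3, Eb4, Eb2]
    ring
  linarith

set_option maxHeartbeats 1000000 in
/-- `UI~(X:(Y,Y')\Z) ≥ UI~(X:Y\Z)`: enlarging the informative variable
does not decrease unique information. -/
theorem UI_monotone_source {X Y Y' Z : Type*} [Fintype X] [Fintype Y] [Fintype Y'] [Fintype Z]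
    (p' : X → Y → Y' → Z → ℝ) (hp : IsDist4 p') :
    UI (fun x (b : Y × Y') z => p' x b.1 b.2 z)
      ≥ UI (fun x y z => ∑ y', p' x y y' z) := by
  classical
  rw [ge_iff_le]
  have hppdist : IsDist3 (fun x (b : Y × Y') z => p' x b.1 b.2 z) := by
    refine ⟨fun a b c => hp.nonneg _ _ _ _, ?_⟩
    show ∑ x, ∑ b : Y × Y', ∑ z, p' x b.1 b.2 z = 1
    rw [← hp.sum_one]
    refine Finset.sum_congr rfl fun x _ => ?_
    exact sum_prod_split (fun b z => p' x b.1 b.2 z)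
  have hne : (Delta (fun x (b : Y × Y') z => p' x b.1 b.2 z)).Nonempty :=
    ⟨fun x b z => p' x b.1 b.2 z, hppdist, fun a b => rfl, fun a c => rfl⟩
  have hbdd : BddBelow (CMI '' Delta (fun x y z => ∑ y', p' x y y' z)) := by
    refine ⟨0, ?_⟩
    rintro v ⟨r, hr, rfl⟩
    exact cmi_nonneg hr.1
  unfold UI
  refine le_csInf (hne.image _) ?_
  rintro v ⟨Qb, hQb, rfl⟩
  obtain ⟨hQd, hm1, hm2⟩ := hQb
  have hQmDelta : (fun x y z => ∑ y', Qb x (y, y') z)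
      ∈ Delta (fun x y z => ∑ y', p' x y y' z) := by
    refine ⟨⟨fun a b c => Finset.sum_nonneg fun y' _ => hQd.nonneg _ _ _, ?_⟩, ?_, ?_⟩
    · show ∑ x, ∑ y, ∑ z, ∑ y', Qb x (y, y') z = 1
      rw [← hQd.sum_one]
      refine Finset.sum_congr rfl fun x _ => ?_
      calc ∑ y, ∑ z, ∑ y', Qb x (y, y') z = ∑ y, ∑ y', ∑ z, Qb x (y, y') z :=
            Finset.sum_congr rfl fun y _ => Finset.sum_comm
        _ = ∑ b : Y × Y', ∑ z, Qb x b z := (sum_prod_split (fun b z => Qb x b z)).symm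
    · intro a y
      show ∑ z, ∑ y', Qb a (y, y') z = ∑ z, ∑ y', p' a y y' z
      calc ∑ z, ∑ y', Qb a (y, y') z = ∑ y', ∑ z, Qb a (y, y') z := Finset.sum_comm
        _ = ∑ y', ∑ z, p' a y y' z := by
            refine Finset.sum_congr rfl fun y' _ => ?_
            simpa using hm1 a (y, y')
        _ = ∑ z, ∑ y', p' a y y' z := Finset.sum_comm
    · intro a c
      show ∑ y, ∑ y', Qb a (y, y') c = ∑ y, ∑ y', p' a y y' c
      calc ∑ y, ∑ y', Qb a (y, y') c = ∑ b : Y × Y', Qb a b c := (Fintype.sum_prod_type (fun b : Y × Y' => Qb a b c)).symm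
        _ = ∑ b : Y × Y', p' a b.1 b.2 c := by simpa using hm2 a c
        _ = ∑ y, ∑ y', p' a y y' c := Fintype.sum_prod_type (fun b : Y × Y' => p' a b.1 b.2 c)
  exact le_trans (csInf_le hbdd ⟨_, hQmDelta, rfl⟩) (cmi_marg_le Qb hQd)

end
end
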